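/- Let m, d ≥ 1 and let α : {1,…,d} × {1,2,3} → {1,…,m} be a map such that α(i,1), α(i,2), α(i,3) are pairwise distinct for every 1 ≤ i ≤ d. Let p₁,…,p_m, r₁,…,r_m, q₁,…,q_d be pairwise distinct odd primes such that p_j > r_j > 2 and p_j > q_i > 2 for all 1 ≤ i ≤ d and 1 ≤ j ≤ m, and set P = max_{1 ≤ j ≤ m} p_j. Work in the group G = ∏_{j=1}^{m} V_j × ∏_{i=1}^{d} C_i, where V_j = S_{p_j} × S_{p_j} × ℤ/p_jℤ × ℤ/p_jℤ × ℤ/r_jℤ and C_i = ℤ/q_iℤ × S_P × S_P × S_P. Define g = (v₁,…,v_m, c₁,…,c_d) and g_k = (v_{k,1},…,v_{k,m}, c_{k,1},…,c_{k,d}) for k = 1,2,3, where v_j = ([r_j], [r_j], 0, 0, 0), c_i = (1, id, id, id), v_{1,j} = ([r_j], [p_j]^{−1}, 1, 1, 1), c_{1,i} = (1, [q_i]^{−1}, [p_{α(i,2)}]^{−1}, [q_i][p_{α(i,3)}]), v_{2,j} = ([p_j]^{−1}, [r_j], −1, 0, −1), c_{2,i} = (1, [q_i][p_{α(i,1)}],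 [q_i]^{−1}, [p_{α(i,3)}]^{−1}), v_{3,j} = ([p_j][r_j], [p_j][r_j], 0, −1, 0), c_{3,i} = (1, [p_{α(i,1)}]^{−1}, [q_i][p_{α(i,2)}], [q_i]^{−1}). Then there exists a subset A' ⊆ {1,…,m} such that |A' ∩ {α(i,1), α(i,2), α(i,3)}| = 1 for every 1 ≤ i ≤ d if and only if there exist z₁, z₂, z₃ ∈ ℤ with g = g₁^{z₁} g₂^{z₂} g₃^{z₃} in G. -/

import Mathlib

/-- The cyclic permutation `[n] = (1,2,…,n)` considered as an element of the symmetric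
group `S_p` on the `p` points `{0,…,p-1}` (written 0-indexed): it maps `i ↦ i + 1` for
`i < n - 1`, maps `n - 1 ↦ 0` and fixes all points `n, …, p - 1`. -/
def cyc (p n : ℕ) : Equiv.Perm (Fin p) :=
  if h : n - 1 < p then Fin.cycleRange ⟨n - 1, h⟩ else 1

/-- The group `V_j = S_{p_j} × S_{p_j} × ℤ/p_jℤ × ℤ/p_jℤ × ℤ/r_jℤ` (the additively
written cyclic groups are wrapped in `Multiplicative` so that the direct product is a
multiplicative group). -/
abbrev Vgrp (p r : ℕ) : Type :=
  Equiv.Perm (Fin p) × Equiv.Perm (Fin p) × Multiplicative (ZMod p) ×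
    Multiplicative (ZMod p) × Multiplicative (ZMod r)

/-- The group `C_i = ℤ/q_iℤ × S_P × S_P × S_P`. -/
abbrev Cgrp (q P : ℕ) : Type :=
  Multiplicative (ZMod q) × Equiv.Perm (Fin P) × Equiv.Perm (Fin P) × Equiv.Perm (Fin P)

/-- The group `G = ∏_j V_j × ∏_i C_i`. -/
abbrev Ggrp (m d : ℕ) (p r : Fin m → ℕ) (q : Fin d → ℕ) (P : ℕ) : Type :=
  (∀ j : Fin m, Vgrp (p j) (r j)) × (∀ i : Fin d, Cgrp (q i) P)

/-- The target element `g = (v₁,…,v_m,c₁,…,c_d)` with `v_j = ([r_j],[r_j],0,0,0)` and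
`c_i = (1,id,id,id)`. -/
def gTarget (m d : ℕ) (p r : Fin m → ℕ) (q : Fin d → ℕ) (P : ℕ) :
    Ggrp m d p r q P :=
  (fun j => (cyc (p j) (r j), cyc (p j) (r j),
      Multiplicative.ofAdd (0 : ZMod (p j)), Multiplicative.ofAdd (0 : ZMod (p j)),
      Multiplicative.ofAdd (0 : ZMod (r j))),
   fun i => (Multiplicative.ofAdd (1 : ZMod (q i)), 1, 1, 1))

/-- The element `g₁` with `v_{1,j} = ([r_j],[p_j]⁻¹,1,1,1)` and
`c_{1,i} = (1,[q_i]⁻¹,[p_{α(i,2)}]⁻¹,[q_i][p_{α(i,3)}])`. (Products of permutations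
are taken left to right in the paper, so a paper product `a b` is `b * a` in Mathlib's
convention `(f * g) x = f (g x)`; `α` is 0-indexed, so `α(i,k)` is `α i (k-1)`.) -/
def gOne (m d : ℕ) (p r : Fin m → ℕ) (q : Fin d → ℕ) (α : Fin d → Fin 3 → Fin m)
    (P : ℕ) : Ggrp m d p r q P :=
  (fun j => (cyc (p j) (r j), (cyc (p j) (p j))⁻¹,
      Multiplicative.ofAdd (1 : ZMod (p j)), Multiplicative.ofAdd (1 : ZMod (p j)),
      Multiplicative.ofAdd (1 : ZMod (r j))),
   fun i => (Multiplicative.ofAdd (1 : ZMod (q i)),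
      (cyc P (q i))⁻¹,
      (cyc P (p (α i 1)))⁻¹,
      cyc P (p (α i 2)) * cyc P (q i)))

/-- The element `g₂` with `v_{2,j} = ([p_j]⁻¹,[r_j],−1,0,−1)` and
`c_{2,i} = (1,[q_i][p_{α(i,1)}],[q_i]⁻¹,[p_{α(i,3)}]⁻¹)`. -/
def gTwo (m d : ℕ) (p r : Fin m → ℕ) (q : Fin d → ℕ) (α : Fin d → Fin 3 → Fin m)
    (P : ℕ) : Ggrp m d p r q P :=
  (fun j => ((cyc (p j) (p j))⁻¹, cyc (p j) (r j),
      Multiplicative.ofAdd (-1 : ZMod (p j)), Multiplicative.ofAdd (0 : ZMod (p j)),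
      Multiplicative.ofAdd (-1 : ZMod (r j))),
   fun i => (Multiplicative.ofAdd (1 : ZMod (q i)),
      cyc P (p (α i 0)) * cyc P (q i),
      (cyc P (q i))⁻¹,
      (cyc P (p (α i 2)))⁻¹))

/-- The element `g₃` with `v_{3,j} = ([p_j][r_j],[p_j][r_j],0,−1,0)` and
`c_{3,i} = (1,[p_{α(i,1)}]⁻¹,[q_i][p_{α(i,2)}],[q_i]⁻¹)`. -/
def gThree (m d : ℕ) (p r : Fin m → ℕ) (q : Fin d → ℕ) (α : Fin d → Fin 3 → Fin m)
    (P : ℕ) : Ggrp m d p r q P :=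
  (fun j => (cyc (p j) (r j) * cyc (p j) (p j), cyc (p j) (r j) * cyc (p j) (p j),
      Multiplicative.ofAdd (0 : ZMod (p j)), Multiplicative.ofAdd (-1 : ZMod (p j)),
      Multiplicative.ofAdd (0 : ZMod (r j))),
   fun i => (Multiplicative.ofAdd (1 : ZMod (q i)),
      (cyc P (p (α i 0)))⁻¹,
      cyc P (p (α i 1)) * cyc P (q i),
      (cyc P (q i))⁻¹))

/-! Write `a, b, c` for `z₁, z₂, z₃`. In a factor `V_j` the abelian coordinates force
`a ≡ b ≡ c (mod p_j)` and `a ≡ b (mod r_j)`. Since `[r_j]` and `[p_j]` do not commute while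
`[r_j][p_j]` is again a `p_j`-cycle, and `p_j, r_j` are prime, the two permutation coordinates
then leave exactly two patterns: `a ≡ 1 (mod p_j)`, `a ≡ 0 (mod r_j)` (meaning `j ∈ A'`) or
`a ≡ 0 (mod p_j)`, `a ≡ 1 (mod r_j)` (meaning `j ∉ A'`). Knowing the residues modulo the
`p_j`, each permutation coordinate of `C_i` says that one of `a, b, c` is congruent modulo `q_i`
to the indicator of `α(i,1), α(i,2)` resp. `α(i,3)` in `A'`, and the first coordinate says that
`a + b + c ≡ 1 (mod q_i)`; as `q_i > 2`, exactly one of the three indices lies in `A'`.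
Conversely, an exact hitting set `A'` prescribes all these residues, and the Chinese remainder
theorem realises them. -/

theorem Int.isCoprime_of_not_modEq_zero {p : ℕ} (hp : p.Prime) {k : ℤ}
    (hk : ¬ k ≡ 0 [ZMOD p]) : IsCoprime k p :=
  ((Nat.prime_iff_prime_int.mp hp).irreducible.coprime_iff_not_dvd.mpr
    fun h => hk (Int.modEq_zero_iff_dvd.mpr h)).symm

theorem Int.exists_modEq_of_pairwise_coprime {ι : Type*} [Finite ι] {n : ι → ℕ}
    (hn : Pairwise (Function.onFun Nat.Coprime n)) (x : ι → ℤ) :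
    ∃ a : ℤ, ∀ i, a ≡ x i [ZMOD n i] := by
  obtain ⟨a, ha⟩ := Ideal.exists_forall_sub_mem_ideal (I := fun i => Ideal.span {(n i : ℤ)})
    (fun i j hij => (Ideal.isCoprime_span_singleton_iff _ _).mpr
      (Nat.isCoprime_iff_coprime.mpr (hn hij))) x
  exact ⟨a, fun i => (Int.modEq_iff_dvd.mpr (Ideal.mem_span_singleton.mp (ha i))).symm⟩

theorem Multiplicative.ofAdd_eq_zpow_mul_zpow_mul_zpow_iff {A : Type*} [AddGroup A]
    (t u v w : A) (a b c : ℤ) :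
    ofAdd t = ofAdd u ^ c * ofAdd v ^ b * ofAdd w ^ a ↔ t = c • u + b • v + a • w := by
  rw [← ofAdd_zsmul, ← ofAdd_zsmul, ← ofAdd_zsmul, ← ofAdd_add, ← ofAdd_add,
    EmbeddingLike.apply_eq_iff_eq]

theorem Finset.card_inter_triple {β : Type*} [DecidableEq β] (A : Finset β) {x y z : β}
    (hxy : x ≠ y) (hxz : x ≠ z) (hyz : y ≠ z) :
    ((A ∩ {x, y, z}).card : ℤ) =
      (if x ∈ A then 1 else 0) + (if y ∈ A then 1 else 0) + (if z ∈ A then 1 else 0) := by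
  rw [Finset.inter_comm, ← Finset.filter_mem_eq_inter, ← Finset.sum_boole,
    Finset.sum_insert (by simp [hxy, hxz]), Finset.sum_pair hyz, add_assoc]

theorem Equiv.Perm.pow_eq_one_of_injOn_of_map_eq_add_one {α : Type*} {n : ℕ} (f : Equiv.Perm α)
    (s : Set α) (pos : α → ZMod n) (hfix : ∀ x ∉ s, f x = x) (hinj : Set.InjOn pos s)
    (hstep : ∀ x ∈ s, pos (f x) = pos x + 1) : f ^ n = 1 := by
  have hmaps : ∀ x ∈ s, f x ∈ s := fun x hx => by
    by_contra h
    exact h (by rw [f.injective (hfix _ h)]; exact hx)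
  have hiter : ∀ k : ℕ, ∀ x ∈ s, (f ^ k) x ∈ s ∧ pos ((f ^ k) x) = pos x + k := by
    intro k
    induction k with
    | zero => simp
    | succ k ih =>
      intro x hx
      obtain ⟨hk, hpos⟩ := ih x hx
      rw [pow_succ', Equiv.Perm.mul_apply, hstep _ hk, hpos]
      exact ⟨hmaps _ hk, by push_cast; ring⟩
  refine Equiv.Perm.ext fun x => ?_
  show (f ^ n) x = x
  by_cases hx : x ∈ s
  · exact hinj (hiter n x hx).1 hx (by rw [(hiter n x hx).2, ZMod.natCast_self, add_zero])
  · exact Equiv.Perm.pow_apply_eq_self_of_apply_eq_self (hfix x hx) n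

section Group

variable {G : Type*} [Group G]

theorem zpow_eq_zpow_of_modEq {g : G} {n : ℕ} (hg : g ^ n = 1) {a b : ℤ}
    (h : a ≡ b [ZMOD n]) : g ^ a = g ^ b :=
  zpow_eq_zpow_iff_modEq.mpr (h.of_dvd (Int.natCast_dvd_natCast.mpr (orderOf_dvd_of_pow_eq_one hg)))

theorem zpow_zpow_eq_self {g : G} {n : ℕ} {k u v : ℤ} (hg : g ^ n = 1)
    (huv : u * k + v * n = 1) : (g ^ k) ^ u = g := by
  calc (g ^ k) ^ u = g ^ (u * k + v * n) := by
        rw [zpow_add, mul_comm v, zpow_mul g (n : ℤ), zpow_natCast, hg, one_zpow, mul_one,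
          mul_comm, zpow_mul]
    _ = g := by rw [huv, zpow_one]

theorem eq_of_zpow_eq_zpow_of_isCoprime {g h : G} {n : ℕ} {k : ℤ} (hg : g ^ n = 1)
    (hh : h ^ n = 1) (hk : IsCoprime k n) (hgh : g ^ k = h ^ k) : g = h := by
  obtain ⟨u, v, huv⟩ := hk
  rw [← zpow_zpow_eq_self hg huv, ← zpow_zpow_eq_self hh huv, hgh]

theorem Commute.of_zpow_left_of_isCoprime {g x : G} {n : ℕ} {k : ℤ} (hg : g ^ n = 1)
    (hk : IsCoprime k n) (h : Commute (g ^ k) x) : Commute g x := by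
  obtain ⟨u, v, huv⟩ := hk
  simpa only [zpow_zpow_eq_self hg huv] using h.zpow_left u

theorem mul_pow_eq_one_of_mul_pow_eq_one {a b : G} {n : ℕ} (h : (b * a) ^ n = 1) :
    (a * b) ^ n = 1 := by
  rw [show a * b = a * (b * a) * a⁻¹ by group, conj_pow, h, mul_one, mul_inv_cancel]

theorem vPerm_eq_iff {R T : G} {p r : ℕ} (hp : p.Prime) (hr : r.Prime)
    (hR : orderOf R = r) (hT : T ^ p = 1) (hRT : (R * T) ^ p = 1) (hcomm : ¬ Commute R T)
    {a b c : ℤ} (hab : a ≡ b [ZMOD p]) (hac : a ≡ c [ZMOD p]) (hab' : a ≡ b [ZMOD r]) :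
    (R = (R * T) ^ c * T⁻¹ ^ b * R ^ a ∧ R = (R * T) ^ c * R ^ b * T⁻¹ ^ a) ↔
      (a ≡ 1 [ZMOD p] ∧ a ≡ 0 [ZMOD r]) ∨ (a ≡ 0 [ZMOD p] ∧ a ≡ 1 [ZMOD r]) := by
  have hRr : R ^ r = 1 := hR ▸ pow_orderOf_eq_one R
  rw [inv_zpow, inv_zpow, ← zpow_eq_zpow_of_modEq hRT hac, ← zpow_eq_zpow_of_modEq hT hab,
    ← zpow_eq_zpow_of_modEq hRr hab']
  constructor
  · rintro ⟨h1, h2⟩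
    by_cases hpa : a ≡ 0 [ZMOD p]
    · rw [zpow_eq_zpow_of_modEq hRT hpa, zpow_eq_zpow_of_modEq hT hpa] at h1
      simp only [zpow_zero, inv_one, one_mul] at h1
      refine .inr ⟨hpa, ?_⟩
      rw [← hR]
      exact zpow_eq_zpow_iff_modEq.mp (h1.symm.trans (zpow_one R).symm)
    by_cases hra : a ≡ 0 [ZMOD r]
    · rw [zpow_eq_zpow_of_modEq hRr hra, zpow_zero, mul_one] at h1
      refine .inl ⟨?_, hra⟩
      by_contra ha1
      -- `(R T)^a = R T^a`, i.e. `(R T)^(a-1) = T^(a-1)`, forces `R T = T`.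
      have hshift : (R * T) ^ (a - 1) = T ^ (a - 1) := by
        refine mul_left_cancel (a := R * T) ?_
        rw [← zpow_one_add, add_sub_cancel, mul_inv_eq_iff_eq_mul.mp h1.symm, mul_assoc,
          ← zpow_one_add, add_sub_cancel]
      have hA := eq_of_zpow_eq_zpow_of_isCoprime hRT hT
        (Int.isCoprime_of_not_modEq_zero hp fun h => ha1 (by simpa using h.add_right 1)) hshift
      exact hcomm (by rw [mul_eq_right.mp hA]; exact Commute.one_left T)
    · -- Comparing `h1` with `h2`, `T^a` commutes with `R^a`; both exponents are units, so `T`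
      -- would commute with `R`.
      have hc : Commute (T ^ a)⁻¹ (R ^ a) := by
        refine mul_left_cancel (a := (R * T) ^ a) ?_
        rw [← mul_assoc, ← mul_assoc, ← h1, ← h2]
      have hTR := Commute.of_zpow_left_of_isCoprime hT (Int.isCoprime_of_not_modEq_zero hp hpa)
        (Commute.inv_left_iff.mp hc)
      exact (hcomm (hTR.symm.of_zpow_left_of_isCoprime hRr
        (Int.isCoprime_of_not_modEq_zero hr hra))).elim
  · rintro (⟨hpa, hra⟩ | ⟨hpa, hra⟩) <;>
      simp only [zpow_eq_zpow_of_modEq hRT hpa, zpow_eq_zpow_of_modEq hT hpa,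
        zpow_eq_zpow_of_modEq hRr hra, zpow_one, zpow_zero, inv_one, mul_one, one_mul,
        mul_inv_cancel_right, and_self]

theorem cPerm_eq_one_iff {T S : G} {p q : ℕ} (hT : T ^ p = 1) (hTS : (T * S) ^ p = 1)
    (hS : orderOf S = q) {x y z ε : ℤ} (hε : ε = 0 ∨ ε = 1) (hx : x ≡ ε [ZMOD p])
    (hy : y ≡ ε [ZMOD p]) :
    T⁻¹ ^ x * (T * S) ^ y * S⁻¹ ^ z = 1 ↔ z ≡ ε [ZMOD q] := by
  rw [inv_zpow, inv_zpow, zpow_eq_zpow_of_modEq hT hx, zpow_eq_zpow_of_modEq hTS hy, ← hS]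
  rcases hε with rfl | rfl
  · simp [zpow_eq_one_iff_modEq]
  · rw [zpow_one, zpow_one, inv_mul_cancel_left, mul_inv_eq_one, eq_comm]
    simpa using zpow_eq_zpow_iff_modEq (x := S) (m := z) (n := 1)

end Group

theorem coe_cyc_apply {N n : ℕ} (hn : n ≤ N) (x : Fin N) :
    (cyc N n x : ℕ) =
      if (x : ℕ) + 1 < n then (x : ℕ) + 1 else if (x : ℕ) + 1 = n then 0 else x := by
  have h : n - 1 < N := by have := x.isLt; omega
  rw [cyc, dif_pos h]
  rcases le_or_gt x ⟨n - 1, h⟩ with hx | hx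
  · rw [Fin.coe_cycleRange_of_le hx]
    simp only [Fin.le_def, Fin.ext_iff] at hx ⊢
    split_ifs <;> omega
  · rw [Fin.cycleRange_of_gt hx]
    rw [Fin.lt_def] at hx
    simp only at hx
    split_ifs <;> omega

theorem orderOf_cyc {N n : ℕ} (hn2 : 2 ≤ n) (hn : n ≤ N) : orderOf (cyc N n) = n := by
  obtain ⟨N, rfl⟩ : ∃ N', N = N' + 1 := ⟨N - 1, by omega⟩
  rw [cyc, dif_pos (by omega), ← Equiv.Perm.lcm_cycleType,
    Fin.cycleType_cycleRange (Fin.ne_of_val_ne (by simp only [Fin.coe_ofNat_eq_mod, Nat.zero_mod]; omega))]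
  simp only [Multiset.lcm_singleton, normalize_eq]
  omega

theorem cyc_pow_self {N n : ℕ} (hn2 : 2 ≤ n) (hn : n ≤ N) : cyc N n ^ n = 1 := by
  simpa only [orderOf_cyc hn2 hn] using pow_orderOf_eq_one (cyc N n)

theorem not_commute_cyc {N n p : ℕ} (hn : 2 ≤ n) (hnp : n < p) (hp : p ≤ N) :
    ¬ Commute (cyc N n) (cyc N p) := by
  intro h
  have := congrArg (fun f : Equiv.Perm (Fin N) => (f ⟨n - 1, by omega⟩ : ℕ)) h.eq
  simp only [Equiv.Perm.mul_apply, coe_cyc_apply hp, coe_cyc_apply (hnp.le.trans hp)] at this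
  split_ifs at this <;> omega

/-- Position of `x` on the orbit `0, 2, 4, …, n - 1, n, n + 1, …, p - 1, 1, 3, …, n - 2` of
`cyc N n * cyc N p`. -/
def cycMulCycIndex (n p x : ℕ) : ℕ :=
  if x < n - 1 then (if x % 2 = 0 then x / 2 else p - (n - 1) / 2 + x / 2) else x - (n - 1) / 2

theorem cyc_mul_cyc_pow_eq_one {N n p : ℕ} (hn : Odd n) (hnp : n < p) (hp : p ≤ N) :
    (cyc N n * cyc N p) ^ p = 1 := by
  obtain ⟨k, rfl⟩ := hn
  refine Equiv.Perm.pow_eq_one_of_injOn_of_map_eq_add_one _ {x | (x : ℕ) < p}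
    (fun x => (cycMulCycIndex (2 * k + 1) p x : ZMod p)) ?_ ?_ ?_
  · intro x hx
    simp only [Set.mem_ofPred_eq, not_lt] at hx
    ext
    rw [Equiv.Perm.mul_apply, coe_cyc_apply (by omega), coe_cyc_apply hp]
    split_ifs <;> omega
  · intro x hx y hy hxy
    simp only [Set.mem_ofPred_eq] at hx hy hxy
    rw [ZMod.natCast_eq_natCast_iff', Nat.mod_eq_of_lt, Nat.mod_eq_of_lt] at hxy
    · ext; unfold cycMulCycIndex at hxy; split_ifs at hxy <;> omega
    all_goals unfold cycMulCycIndex; split_ifs <;> omega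
  · intro x hx
    simp only [Set.mem_ofPred_eq] at hx
    have key : cycMulCycIndex (2 * k + 1) p ((cyc N (2 * k + 1) * cyc N p) x) =
          cycMulCycIndex (2 * k + 1) p x + 1 ∨
        (cycMulCycIndex (2 * k + 1) p ((cyc N (2 * k + 1) * cyc N p) x) = 0 ∧
          cycMulCycIndex (2 * k + 1) p x + 1 = p) := by
      rw [Equiv.Perm.mul_apply, coe_cyc_apply (by omega), coe_cyc_apply hp]
      unfold cycMulCycIndex
      split_ifs <;> first | contradiction | omega
    rcases key with h | ⟨h0, hlast⟩
    · simp only [h, Nat.cast_add, Nat.cast_one]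
    · rw [h0, Nat.cast_zero, ← Nat.cast_add_one, hlast, ZMod.natCast_self]

theorem vComponent_eq_iff {p r : ℕ} (hp : p.Prime) (hr : r.Prime) (hr_odd : Odd r)
    (hrp : r < p) {a b c : ℤ} :
    ((cyc p r, cyc p r, Multiplicative.ofAdd (0 : ZMod p), Multiplicative.ofAdd (0 : ZMod p),
        Multiplicative.ofAdd (0 : ZMod r)) : Vgrp p r) =
      (cyc p r * cyc p p, cyc p r * cyc p p, Multiplicative.ofAdd 0, Multiplicative.ofAdd (-1),
          Multiplicative.ofAdd 0) ^ c *
        ((cyc p p)⁻¹, cyc p r, Multiplicative.ofAdd (-1), Multiplicative.ofAdd 0,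
          Multiplicative.ofAdd (-1)) ^ b *
        (cyc p r, (cyc p p)⁻¹, Multiplicative.ofAdd 1, Multiplicative.ofAdd 1,
          Multiplicative.ofAdd 1) ^ a ↔
    ∃ ε : ℤ, (ε = 0 ∨ ε = 1) ∧ a ≡ ε [ZMOD p] ∧ b ≡ ε [ZMOD p] ∧ c ≡ ε [ZMOD p] ∧
      a ≡ 1 - ε [ZMOD r] ∧ b ≡ 1 - ε [ZMOD r] := by
  simp only [Prod.ext_iff, Prod.fst_mul, Prod.snd_mul, Prod.pow_fst, Prod.pow_snd,
    Multiplicative.ofAdd_eq_zpow_mul_zpow_mul_zpow_iff, zsmul_eq_mul]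
  have hab {n : ℕ} : (0 : ZMod n) = c * 0 + b * -1 + a * 1 ↔ a ≡ b [ZMOD n] := by
    rw [← ZMod.intCast_eq_intCast_iff]
    constructor <;> intro h <;> linear_combination -h
  have hac : (0 : ZMod p) = c * -1 + b * 0 + a * 1 ↔ a ≡ c [ZMOD p] := by
    rw [← ZMod.intCast_eq_intCast_iff]
    constructor <;> intro h <;> linear_combination -h
  have hperm := vPerm_eq_iff hp hr (orderOf_cyc hr.two_le hrp.le)
    (cyc_pow_self hp.two_le le_rfl) (cyc_mul_cyc_pow_eq_one hr_odd hrp le_rfl)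
    (not_commute_cyc hr.two_le hrp le_rfl) (a := a) (b := b) (c := c)
  rw [hab, hac, hab]
  constructor
  · rintro ⟨h1, h2, hpb, hpc, hrb⟩
    rcases (hperm hpb hpc hrb).mp ⟨h1, h2⟩ with ⟨hp1, hr0⟩ | ⟨hp0, hr1⟩
    · exact ⟨1, .inr rfl, hp1, hpb.symm.trans hp1, hpc.symm.trans hp1, by simpa using hr0,
        by simpa using hrb.symm.trans hr0⟩
    · exact ⟨0, .inl rfl, hp0, hpb.symm.trans hp0, hpc.symm.trans hp0, by simpa using hr1,
        by simpa using hrb.symm.trans hr1⟩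
  · rintro ⟨ε, hε, hpa, hpb, hpc, hra, hrb⟩
    have hpb' := hpa.trans hpb.symm
    have hpc' := hpa.trans hpc.symm
    have hrb' := hra.trans hrb.symm
    obtain ⟨h1, h2⟩ := (hperm hpb' hpc' hrb').mpr (by
      rcases hε with rfl | rfl
      · exact .inr ⟨hpa, by simpa using hra⟩
      · exact .inl ⟨hpa, by simpa using hra⟩)
    exact ⟨h1, h2, hpb', hpc', hrb'⟩

theorem cComponent_eq_iff {q P : ℕ} (s : Fin 3 → ℕ) (e : Fin 3 → ℤ) (hq : 2 ≤ q)
    (hq_odd : Odd q) (hqs : ∀ k, q < s k) (hsP : ∀ k, s k ≤ P) (he : ∀ k, e k = 0 ∨ e k = 1)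
    {a b c : ℤ} (ha : ∀ k, a ≡ e k [ZMOD s k]) (hb : ∀ k, b ≡ e k [ZMOD s k])
    (hc : ∀ k, c ≡ e k [ZMOD s k]) :
    ((Multiplicative.ofAdd (1 : ZMod q), 1, 1, 1) : Cgrp q P) =
      (Multiplicative.ofAdd 1, (cyc P (s 0))⁻¹, cyc P (s 1) * cyc P q, (cyc P q)⁻¹) ^ c *
        (Multiplicative.ofAdd 1, cyc P (s 0) * cyc P q, (cyc P q)⁻¹, (cyc P (s 2))⁻¹) ^ b *
        (Multiplicative.ofAdd 1, (cyc P q)⁻¹, (cyc P (s 1))⁻¹, cyc P (s 2) * cyc P q) ^ a ↔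
    a + b + c ≡ 1 [ZMOD q] ∧ a ≡ e 0 [ZMOD q] ∧ b ≡ e 1 [ZMOD q] ∧ c ≡ e 2 [ZMOD q] := by
  simp only [Prod.ext_iff, Prod.fst_mul, Prod.snd_mul, Prod.pow_fst, Prod.pow_snd,
    Multiplicative.ofAdd_eq_zpow_mul_zpow_mul_zpow_iff, zsmul_eq_mul]
  have hsum : (1 : ZMod q) = c * 1 + b * 1 + a * 1 ↔ a + b + c ≡ 1 [ZMOD q] := by
    rw [← ZMod.intCast_eq_intCast_iff]
    push_cast
    constructor <;> intro h <;> linear_combination -h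
  have hword (k : Fin 3) {x y z : ℤ} (hx : x ≡ e k [ZMOD s k]) (hy : y ≡ e k [ZMOD s k]) :=
    cPerm_eq_one_iff (z := z) (cyc_pow_self (by linarith [hqs k]) (hsP k))
      (mul_pow_eq_one_of_mul_pow_eq_one (cyc_mul_cyc_pow_eq_one hq_odd (hqs k) (hsP k)))
      (orderOf_cyc hq ((hqs k).le.trans (hsP k))) (he k) hx hy
  -- every permutation coordinate is a cyclic rotation of the word of `cPerm_eq_one_iff`
  refine hsum.and (.and ?_ (.and ?_ ?_))
  · rw [eq_comm]
    exact hword 0 (hc 0) (hb 0)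
  · rw [eq_comm, mul_eq_one_comm, ← mul_assoc]
    exact hword 1 (ha 1) (hc 1)
  · rw [eq_comm, mul_assoc, mul_eq_one_comm]
    exact hword 2 (hb 2) (ha 2)

/-- `ε j ∈ {0, 1}` encodes `j ∈ A'`; these are the residues of `(z₁, z₂, z₃) = (a, b, c)` that
the factors `V_j` and `C_i` impose. -/
def KnapsackCongruences {m d : ℕ} (α : Fin d → Fin 3 → Fin m) (p r : Fin m → ℕ)
    (q : Fin d → ℕ) (ε : Fin m → ℤ) (a b c : ℤ) : Prop :=
  (∀ j, (ε j = 0 ∨ ε j = 1) ∧ a ≡ ε j [ZMOD p j] ∧ b ≡ ε j [ZMOD p j] ∧ c ≡ ε j [ZMOD p j] ∧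
      a ≡ 1 - ε j [ZMOD r j] ∧ b ≡ 1 - ε j [ZMOD r j]) ∧
    ∀ i, a + b + c ≡ 1 [ZMOD q i] ∧ a ≡ ε (α i 0) [ZMOD q i] ∧ b ≡ ε (α i 1) [ZMOD q i] ∧
      c ≡ ε (α i 2) [ZMOD q i]

theorem gTarget_eq_iff {m d P : ℕ} {α : Fin d → Fin 3 → Fin m} {p r : Fin m → ℕ}
    {q : Fin d → ℕ} (hp : ∀ j, (p j).Prime) (hr : ∀ j, (r j).Prime) (hq : ∀ i, (q i).Prime)
    (hr_odd : ∀ j, Odd (r j)) (hq_odd : ∀ i, Odd (q i)) (hrp : ∀ j, r j < p j)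
    (hqp : ∀ i j, q i < p j) (hpP : ∀ j, p j ≤ P) {a b c : ℤ} :
    gTarget m d p r q P = gThree m d p r q α P ^ c * gTwo m d p r q α P ^ b *
        gOne m d p r q α P ^ a ↔
      ∃ ε, KnapsackCongruences α p r q ε a b c := by
  rw [Prod.ext_iff, funext_iff, funext_iff]
  simp only [Prod.fst_mul, Prod.snd_mul, Prod.pow_fst, Prod.pow_snd, Pi.mul_apply, Pi.pow_apply]
  have hV (j : Fin m) := vComponent_eq_iff (hp j) (hr j) (hr_odd j) (hrp j) (a := a) (b := b)
    (c := c)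
  have hC (i : Fin d) (ε : Fin m → ℤ) (hε : ∀ j, (ε j = 0 ∨ ε j = 1) ∧ a ≡ ε j [ZMOD p j] ∧
      b ≡ ε j [ZMOD p j] ∧ c ≡ ε j [ZMOD p j] ∧ a ≡ 1 - ε j [ZMOD r j] ∧
      b ≡ 1 - ε j [ZMOD r j]) :=
    cComponent_eq_iff (P := P) (fun k => p (α i k)) (fun k => ε (α i k)) (hq i).two_le
      (hq_odd i) (fun k => hqp i _) (fun k => hpP _) (fun k => (hε _).1) (fun k => (hε _).2.1)
      (fun k => (hε _).2.2.1) (fun k => (hε _).2.2.2.1)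
  constructor
  · rintro ⟨hVeq, hCeq⟩
    choose ε hε using fun j => (hV j).mp (hVeq j)
    exact ⟨ε, hε, fun i => (hC i ε hε).mp (hCeq i)⟩
  · rintro ⟨ε, hε, hεq⟩
    exact ⟨fun j => (hV j).mpr ⟨ε j, hε j⟩, fun i => (hC i ε hε).mpr (hεq i)⟩

theorem exists_knapsackCongruences_iff {m d : ℕ} (α : Fin d → Fin 3 → Fin m)
    {p r : Fin m → ℕ} {q : Fin d → ℕ}
    (hcop : Pairwise (Function.onFun Nat.Coprime (Sum.elim p (Sum.elim r q))))
    (h2q : ∀ i, 2 < q i) (ε : Fin m → ℤ) :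
    (∃ a b c, KnapsackCongruences α p r q ε a b c) ↔
      (∀ j, ε j = 0 ∨ ε j = 1) ∧ ∀ i, ε (α i 0) + ε (α i 1) + ε (α i 2) = 1 := by
  constructor
  · rintro ⟨a, b, c, hp, hq⟩
    refine ⟨fun j => (hp j).1, fun i => ?_⟩
    obtain ⟨hsum, ha, hb, hc⟩ := hq i
    have hdvd := Int.modEq_iff_dvd.mp (((ha.add hb).add hc).symm.trans hsum)
    have h0 := (hp (α i 0)).1
    have h1 := (hp (α i 1)).1
    have h2 := (hp (α i 2)).1
    have hq2 := h2q i
    -- the sum lies in `[0, 3]` and is `≡ 1` modulo `q i > 2`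
    have := Int.eq_zero_of_abs_lt_dvd hdvd (by rw [abs_lt]; constructor <;> omega)
    linarith
  · rintro ⟨h01, hsum⟩
    obtain ⟨a, ha⟩ := Int.exists_modEq_of_pairwise_coprime hcop
      (Sum.elim ε (Sum.elim (fun j => 1 - ε j) fun i => ε (α i 0)))
    obtain ⟨b, hb⟩ := Int.exists_modEq_of_pairwise_coprime hcop
      (Sum.elim ε (Sum.elim (fun j => 1 - ε j) fun i => ε (α i 1)))
    obtain ⟨c, hc⟩ := Int.exists_modEq_of_pairwise_coprime hcop
      (Sum.elim ε (Sum.elim (fun _ => 0) fun i => ε (α i 2)))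
    refine ⟨a, b, c, fun j => ⟨h01 j, ha (.inl j), hb (.inl j), hc (.inl j), ha (.inr (.inl j)),
      hb (.inr (.inl j))⟩,
      fun i => ⟨?_, ha (.inr (.inr i)), hb (.inr (.inr i)), hc (.inr (.inr i))⟩⟩
    rw [← hsum i]
    exact ((ha (.inr (.inr i))).add (hb (.inr (.inr i)))).add (hc (.inr (.inr i)))

theorem exists_card_inter_eq_one_iff {m d : ℕ} (α : Fin d → Fin 3 → Fin m)
    (hα : ∀ i, Function.Injective (α i)) :
    (∃ A' : Finset (Fin m), ∀ i, (A' ∩ {α i 0, α i 1, α i 2}).card = 1) ↔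
      ∃ ε : Fin m → ℤ, (∀ j, ε j = 0 ∨ ε j = 1) ∧
        ∀ i, ε (α i 0) + ε (α i 1) + ε (α i 2) = 1 := by
  have hcard (A' : Finset (Fin m)) (i : Fin d) := A'.card_inter_triple
    ((hα i).ne (by decide : (0 : Fin 3) ≠ 1)) ((hα i).ne (by decide : (0 : Fin 3) ≠ 2))
    ((hα i).ne (by decide : (1 : Fin 3) ≠ 2))
  constructor
  · rintro ⟨A', hA'⟩
    refine ⟨fun j => if j ∈ A' then 1 else 0, fun j => by by_cases h : j ∈ A' <;> simp [h],
      fun i => ?_⟩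
    simpa [hA' i] using (hcard A' i).symm
  · rintro ⟨ε, h01, hsum⟩
    let A' := Finset.univ.filter fun j => ε j = 1
    have hind (j : Fin m) : (if j ∈ A' then 1 else 0) = ε j := by
      rcases h01 j with h | h <;> simp [A', h]
    refine ⟨A', fun i => ?_⟩
    have := hcard A' i
    rw [hind, hind, hind, hsum i] at this
    exact_mod_cast this

theorem x3hs_iff_three_knapsack_general
    (m d : ℕ)
    (α : Fin d → Fin 3 → Fin m) (hα : ∀ i, Function.Injective (α i))
    (p r : Fin m → ℕ) (q : Fin d → ℕ)
    (hp : ∀ j, (p j).Prime) (hr : ∀ j, (r j).Prime) (hq : ∀ i, (q i).Prime)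
    (hr_odd : ∀ j, Odd (r j)) (hq_odd : ∀ i, Odd (q i))
    (hrp : ∀ j, r j < p j)
    (hqp : ∀ i j, q i < p j) (h2q : ∀ i, 2 < q i)
    (hp_inj : Function.Injective p) (hr_inj : Function.Injective r)
    (hq_inj : Function.Injective q)
    (hpr : ∀ j j', p j ≠ r j') (hpq : ∀ j i, p j ≠ q i) (hrq : ∀ j i, r j ≠ q i)
    (P : ℕ) (hP : IsGreatest (Set.range p) P) :
    (∃ A' : Finset (Fin m), ∀ i : Fin d,
        (A' ∩ ({α i 0, α i 1, α i 2} : Finset (Fin m))).card = 1) ↔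
    (∃ z₁ z₂ z₃ : ℤ,
        gTarget m d p r q P =
          gThree m d p r q α P ^ z₃ * gTwo m d p r q α P ^ z₂ *
            gOne m d p r q α P ^ z₁) := by
  have hprime : ∀ x, (Sum.elim p (Sum.elim r q) x).Prime := by
    rintro (j | j | i)
    exacts [hp j, hr j, hq i]
  have hinj : Function.Injective (Sum.elim p (Sum.elim r q)) :=
    hp_inj.sumElim (hr_inj.sumElim hq_inj hrq) fun j => by
      rintro (j' | i)
      exacts [hpr j j', hpq j i]
  have hcop : Pairwise (Function.onFun Nat.Coprime (Sum.elim p (Sum.elim r q))) :=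
    fun x y hxy => (Nat.coprime_primes (hprime x) (hprime y)).mpr (hinj.ne hxy)
  rw [exists_card_inter_eq_one_iff α hα]
  simp only [gTarget_eq_iff hp hr hq hr_odd hq_odd hrp hqp fun j => hP.2 ⟨j, rfl⟩,
    ← exists_knapsackCongruences_iff α hcop h2q]
  exact ⟨fun ⟨ε, a, b, c, h⟩ => ⟨a, b, c, ε, h⟩, fun ⟨a, b, c, ε, h⟩ => ⟨ε, a, b, c, h⟩⟩

/-- With pairwise distinct odd primes `p_j, r_j, q_i` satisfying
`p_j > r_j > 2` and `p_j > q_i > 2`, `P = max_j p_j`, the group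
`G = ∏_j V_j × ∏_i C_i` and the elements `g, g₁, g₂, g₃` defined above, there exists
`A' ⊆ {1,…,m}` with `|A' ∩ {α(i,1),α(i,2),α(i,3)}| = 1` for every `i` if and only if
there are `z₁, z₂, z₃ ∈ ℤ` with `g = g₁^{z₁} g₂^{z₂} g₃^{z₃}` in `G` (the paper's
left-to-right product `g₁^{z₁} g₂^{z₂} g₃^{z₃}` is `g₃^{z₃} * g₂^{z₂} * g₁^{z₁}` in
Mathlib's convention). -/
theorem x3hs_iff_three_knapsack
    (m d : ℕ) (hm : 1 ≤ m) (hd : 1 ≤ d)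
    (α : Fin d → Fin 3 → Fin m) (hα : ∀ i, Function.Injective (α i))
    (p r : Fin m → ℕ) (q : Fin d → ℕ)
    (hp : ∀ j, (p j).Prime) (hr : ∀ j, (r j).Prime) (hq : ∀ i, (q i).Prime)
    (hp_odd : ∀ j, Odd (p j)) (hr_odd : ∀ j, Odd (r j)) (hq_odd : ∀ i, Odd (q i))
    (hrp : ∀ j, r j < p j) (h2r : ∀ j, 2 < r j)
    (hqp : ∀ i j, q i < p j) (h2q : ∀ i, 2 < q i)
    (hp_inj : Function.Injective p) (hr_inj : Function.Injective r)
    (hq_inj : Function.Injective q)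
    (hpr : ∀ j j', p j ≠ r j') (hpq : ∀ j i, p j ≠ q i) (hrq : ∀ j i, r j ≠ q i)
    (P : ℕ) (hP : IsGreatest (Set.range p) P) :
    (∃ A' : Finset (Fin m), ∀ i : Fin d,
        (A' ∩ ({α i 0, α i 1, α i 2} : Finset (Fin m))).card = 1) ↔
    (∃ z₁ z₂ z₃ : ℤ,
        gTarget m d p r q P =
          gThree m d p r q α P ^ z₃ * gTwo m d p r q α P ^ z₂ *
            gOne m d p r q α P ^ z₁) :=
  x3hs_iff_three_knapsack_general m d α hα p r q hp hr hq hr_odd hq_odd hrp hqp h2q hp_inj hr_inj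
    hq_inj hpr hpq hrq P hP
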